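/- arXiv:1807.06282 — 2 statements merged into one kernel-verified Lean document; each statement's English description precedes it below -/
import Mathlib

section
/- Let P be a compact Hausdorff topological semigroup with jointly continuous multiplication. If the left cancellation law fails (i.e. there exist s, t, r in P with s·t = s·r but t ≠ r), then the set {(x,y) ↦ f(x)·g(x·y) : f, g ∈ C(P)} does not have dense linear span in C(P × P) with the uniform norm. -/
/-!
The functional `F ↦ F (s, t) - F (s, r)` is continuous and kills every generator
`f x * g (x * y)`, because `s * t = s * r`; so it kills the closure of their span. It is
nonzero on `C(P × P, ℂ)`, since `P × P` is completely regular and `(s, t) ≠ (s, r)`.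
-/

namespace ContinuousMap

variable {X 𝕜 : Type*} [TopologicalSpace X] [RCLike 𝕜]

theorem exists_apply_ne [T35Space X] {x y : X} (hxy : x ≠ y) : ∃ F : C(X, 𝕜), F x ≠ F y := by
  obtain ⟨f, hf, hfxy⟩ := separatesPoints_continuous_of_t35Space hxy
  exact ⟨⟨fun z ↦ (f z : 𝕜), RCLike.continuous_ofReal.comp hf⟩, by simpa using hfxy⟩

theorem apply_eq_apply_of_dense_span {S : Set C(X, 𝕜)}
    (hS : Dense (Submodule.span 𝕜 S : Set C(X, 𝕜))) {x y : X} (hxy : ∀ F ∈ S, F x = F y)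
    (F : C(X, 𝕜)) : F x = F y :=
  congrArg (· F) (ContinuousLinearMap.ext_on hS (f := evalCLM 𝕜 x) (g := evalCLM 𝕜 y) hxy)

theorem not_dense_span_of_apply_eq [T35Space X] {S : Set C(X, 𝕜)} {x y : X} (hxy : x ≠ y)
    (hS : ∀ F ∈ S, F x = F y) : ¬ Dense (Submodule.span 𝕜 S : Set C(X, 𝕜)) := fun hdense ↦
  let ⟨F, hF⟩ := exists_apply_ne (𝕜 := 𝕜) hxy
  hF (apply_eq_apply_of_dense_span hdense hS F)

end ContinuousMap

theorem cancellation_fails_implies_not_dense_general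
    {P : Type*} [TopologicalSpace P] [CompactSpace P] [T2Space P]
    [Semigroup P]
    (h : ∃ s t r : P, s * t = s * r ∧ t ≠ r) :
    ¬ Dense (↑(Submodule.span ℂ
      {F : C(P × P, ℂ) | ∃ f g : C(P, ℂ), ∀ p : P × P, F p = f p.1 * g (p.1 * p.2)}) :
      Set C(P × P, ℂ)) := by
  obtain ⟨s, t, r, hst, htr⟩ := h
  refine ContinuousMap.not_dense_span_of_apply_eq (x := (s, t)) (y := (s, r))
    (by simpa using htr) ?_
  rintro F ⟨f, g, hF⟩
  rw [hF, hF, hst]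

/-- if left cancellation fails in a compact topological semigroup
`P`, then the span of `{(x,y) ↦ f x * g (x*y)}` is not dense in `C(P × P)`. -/
theorem cancellation_fails_implies_not_dense
    {P : Type*} [TopologicalSpace P] [CompactSpace P] [T2Space P]
    [Semigroup P] [ContinuousMul P]
    (h : ∃ s t r : P, s * t = s * r ∧ t ≠ r) :
    ¬ Dense (↑(Submodule.span ℂ
      {F : C(P × P, ℂ) | ∃ f g : C(P, ℂ), ∀ p : P × P, F p = f p.1 * g (p.1 * p.2)}) :
      Set C(P × P, ℂ)) :=
  cancellation_fails_implies_not_dense_general h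
end

section
/- Let P be a compact Hausdorff topological semigroup with jointly continuous multiplication satisfying the left cancellation law (s·t = s·r implies t = r). Then the *-subalgebra generated by functions of the form (x,y) ↦ f(x)·g(x·y), for f, g ∈ C(P), separates points of P × P, and hence its closed linear span is dense in C(P × P). -/
/-! Left cancellation makes `(x, y) ↦ (x, x * y)` injective, so the two coordinate functions
`x` and `x * y` separate the points of `P × P`. Both are of the form `f x * g (x * y)` (take
`g = 1`, resp. `f = 1`), and the complex Stone–Weierstrass theorem turns separation into density. -/

open ContinuousMap

lemma exists_continuousMap_complex_ne {X : Type*} [TopologicalSpace X] [T35Space X] {a b : X}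
    (hab : a ≠ b) : ∃ f : C(X, ℂ), f a ≠ f b := by
  obtain ⟨f, hf, hne⟩ := separatesPoints_continuous_of_t35Space hab
  exact ⟨⟨fun x => (f x : ℂ), Complex.continuous_ofReal.comp hf⟩, by simpa using hne⟩

lemma dense_starAlgebra_adjoin_of_separatesPoints {X 𝕜 : Type*} [TopologicalSpace X]
    [CompactSpace X] [RCLike 𝕜] {S : Set C(X, 𝕜)}
    (hS : ∀ x y : X, x ≠ y → ∃ F ∈ S, F x ≠ F y) :
    Dense (StarAlgebra.adjoin 𝕜 S : Set C(X, 𝕜)) := by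
  have hsep : (StarAlgebra.adjoin 𝕜 S).SeparatesPoints := fun x y hxy => by
    obtain ⟨F, hF, hne⟩ := hS x y hxy
    exact ⟨F, ⟨F, StarAlgebra.subset_adjoin 𝕜 S hF, rfl⟩, hne⟩
  rw [dense_iff_closure_eq, ← StarSubalgebra.topologicalClosure_coe,
    starSubalgebra_topologicalClosure_eq_top_of_separatesPoints _ hsep]
  rfl

lemma injective_fst_mul_of_left_cancel {P : Type*} [Mul P]
    (hcancel : ∀ s t r : P, s * t = s * r → t = r) :
    Function.Injective fun p : P × P => (p.1, p.1 * p.2) := by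
  rintro ⟨x, y⟩ ⟨x', y'⟩ h
  obtain ⟨rfl, hmul⟩ := Prod.mk.inj h
  rw [hcancel x y y' hmul]

section ShearProducts

variable {P : Type*} [TopologicalSpace P] [Mul P]

variable (P) in
/-- Pullbacks of the tensors `f ⊗ g` along the shear `(x, y) ↦ (x, x * y)`. -/
def shearProducts : Set C(P × P, ℂ) :=
  {F | ∃ f g : C(P, ℂ), ∀ p : P × P, F p = f p.1 * g (p.1 * p.2)}

lemma comp_fst_mem_shearProducts (f : C(P, ℂ)) : f.comp fst ∈ shearProducts P :=
  ⟨f, 1, fun _ => by simp⟩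

lemma comp_mul_mem_shearProducts [ContinuousMul P] (g : C(P, ℂ)) :
    g.comp ⟨fun p : P × P => p.1 * p.2, continuous_mul⟩ ∈ shearProducts P :=
  ⟨1, g, fun _ => by simp⟩

lemma shearProducts_separatesPoints [T35Space P] [ContinuousMul P]
    (hinj : Function.Injective fun p : P × P => (p.1, p.1 * p.2)) (p q : P × P) (hpq : p ≠ q) :
    ∃ F ∈ shearProducts P, F p ≠ F q := by
  by_cases hfst : p.1 = q.1
  · have hmul : p.1 * p.2 ≠ q.1 * q.2 := fun h => hpq (hinj (Prod.ext hfst h))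
    obtain ⟨g, hg⟩ := exists_continuousMap_complex_ne hmul
    exact ⟨_, comp_mul_mem_shearProducts g, hg⟩
  · obtain ⟨f, hf⟩ := exists_continuousMap_complex_ne hfst
    exact ⟨_, comp_fst_mem_shearProducts f, hf⟩

end ShearProducts

/-- if a compact topological semigroup `P` satisfies left
cancellation, then the *-subalgebra of `C(P × P)` generated by the functions
`(x,y) ↦ f x * g (x*y)` separates points and is dense. -/
theorem cancellation_implies_separates_and_dense
    {P : Type*} [TopologicalSpace P] [CompactSpace P] [T2Space P]
    [Semigroup P] [ContinuousMul P]
    (hcancel : ∀ s t r : P, s * t = s * r → t = r) :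
    (∀ p q : P × P, p ≠ q →
      ∃ F ∈ StarAlgebra.adjoin ℂ
        {F : C(P × P, ℂ) | ∃ f g : C(P, ℂ), ∀ p : P × P, F p = f p.1 * g (p.1 * p.2)},
        F p ≠ F q) ∧
    Dense (↑(StarAlgebra.adjoin ℂ
      {F : C(P × P, ℂ) | ∃ f g : C(P, ℂ), ∀ p : P × P, F p = f p.1 * g (p.1 * p.2)}) :
      Set C(P × P, ℂ)) := by
  have hsep := shearProducts_separatesPoints (injective_fst_mul_of_left_cancel hcancel)
  refine ⟨fun p q hpq => ?_, dense_starAlgebra_adjoin_of_separatesPoints hsep⟩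
  obtain ⟨F, hF, hne⟩ := hsep p q hpq
  exact ⟨F, StarAlgebra.subset_adjoin ℂ _ hF, hne⟩
end
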